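/- arXiv:1509.01558 — 3 statements merged into one kernel-verified Lean document; each statement's English description precedes it below -/
import Mathlib

section
/- In a spacetime with an ordered foliation, no strictly future directed causal curve can intersect a given leaf of the foliation more than once. -/
/-- In a spacetime with an ordered foliation, no strictly future directed
causal curve can intersect a given leaf of the foliation more than once.
`leaf p` is the leaf through `p`, `Jplus p` the causal future of `p`.  A future
directed causal curve is modelled by a curve `γ` such that any later point on the
curve lies in the causal future of any earlier point.  The causality condition is
the mutual disjointness of `Jplus p` and `leaf p`. -/
theorem stmt_0 {M : Type*}
    (leaf : M → Set M) (Jplus : M → Set M)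
    -- every event lies on its own leaf
    (hmem : ∀ p, p ∈ leaf p)
    -- every event lies on exactly one leaf
    (hleaf : ∀ p q, q ∈ leaf p → leaf q = leaf p)
    -- causality condition: the causal future of p is disjoint from the leaf of p
    (hdisj : ∀ p, Disjoint (Jplus p) (leaf p))
    -- a strictly future directed causal curve
    (γ : ℝ → M)
    (hcausal : ∀ s t : ℝ, s < t → γ t ∈ Jplus (γ s)) :
    ∀ p : M, ∀ s t : ℝ, s ≠ t → γ s ∈ leaf p → γ t ∈ leaf p → False := by
  have key : ∀ s t : ℝ, s < t → ∀ p, γ s ∈ leaf p → γ t ∈ leaf p → False := by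
    intro s t hst p hs ht
    have h1 : leaf (γ s) = leaf p := hleaf p (γ s) hs
    have h2 : γ t ∈ leaf (γ s) := h1 ▸ ht
    exact (hdisj (γ s)).ne_of_mem (hcausal s t hst) h2 rfl
  intro p s t hne hs ht
  rcases lt_or_gt_of_ne hne with h | h
  · exact key s t h p hs ht
  · exact key t s h p ht hs
end

section
/- A spacetime with an ordered foliation satisfying the causality condition cannot be compact. -/
/-!
Reading `q ∈ J^+(Σ_p)` as "`p` strictly precedes `q`", monotonicity and `p ∉ J^+(Σ_p)` make this
a strict partial order. In a finite cover `J^+(Σ_{p_1}), …, J^+(Σ_{p_n})` a minimal `p_i` has no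
predecessor among the `p_j`, so it lies in none of the sets. Hence the open cover by all
`J^+(Σ_p)` has no finite subcover.
-/

open Set

section

variable {X : Type*} {J : X → Set X}

theorem isStrictOrder_of_mem_imp_subset (hmono : ∀ p q, q ∈ J p → J q ⊆ J p)
    (hirr : ∀ p, p ∉ J p) : IsStrictOrder X (fun p q => q ∈ J p) where
  irrefl := hirr
  trans _ _ _ hpq hqr := hmono _ _ hpq hqr

theorem exists_notMem_biUnion_of_finite {s : Set X} (hs : s.Finite) (hne : s.Nonempty)
    (hmono : ∀ p q, q ∈ J p → J q ⊆ J p) (hirr : ∀ p, p ∉ J p) :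
    ∃ p ∈ s, p ∉ ⋃ q ∈ s, J q := by
  have := isStrictOrder_of_mem_imp_subset hmono hirr
  obtain ⟨⟨p, hp⟩, -, hmin⟩ :=
    (hs.wellFoundedOn (r := fun p q => q ∈ J p)).has_min univ ⟨⟨_, hne.some_mem⟩, trivial⟩
  refine ⟨p, hp, fun hpJ => ?_⟩
  obtain ⟨q, hq, hpq⟩ := mem_iUnion₂.mp hpJ
  exact hmin ⟨q, hq⟩ trivial hpq

end

theorem stmt_5_general {M : Type*} [TopologicalSpace M] [Nonempty M]
    (JplusS : M → Set M)
    (hopen : ∀ p, IsOpen (JplusS p))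
    (hcover : ∀ q : M, ∃ p : M, q ∈ JplusS p)
    (hmono : ∀ p q, q ∈ JplusS p → JplusS q ⊆ JplusS p)
    (hirr : ∀ p, p ∉ JplusS p) :
    ¬ CompactSpace M := by
  intro _
  obtain ⟨s, hs⟩ := isCompact_univ.elim_finite_subcover JplusS hopen
    fun q _ => mem_iUnion.mpr (hcover q)
  obtain ⟨x⟩ := ‹Nonempty M›
  have hne : (s : Set M).Nonempty := by
    obtain ⟨q, hq, -⟩ := mem_iUnion₂.mp (hs (mem_univ x))
    exact ⟨q, hq⟩
  obtain ⟨p, -, hp⟩ := exists_notMem_biUnion_of_finite s.finite_toSet hne hmono hirr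
  exact hp (by simpa using hs (mem_univ p))

/-- A spacetime with an ordered foliation satisfying the causality
condition cannot be compact.  Here `JplusS p` denotes `J^+(Σ_p)`, the causal future
of the leaf through `p`.  These sets are open, they cover `M`, the events are
chronologically ordered, `J^+(Σ_q) ⊆ J^+(Σ_p)` whenever `q ∈ J^+(Σ_p)`, and
`p ∉ J^+(Σ_p)`; hence no finite subcollection can cover `M`, so `M` is not compact. -/
theorem stmt_5 {M : Type*} [TopologicalSpace M] [Nonempty M]
    (JplusS : M → Set M)
    (hopen : ∀ p, IsOpen (JplusS p))
    (hcover : ∀ q : M, ∃ p : M, q ∈ JplusS p)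
    (hmono : ∀ p q, q ∈ JplusS p → JplusS q ⊆ JplusS p)
    (hirr : ∀ p, p ∉ JplusS p)
    (htotal : ∀ p q, p ∈ JplusS q ∨ q ∈ JplusS p ∨ JplusS p = JplusS q) :
    ¬ CompactSpace M :=
  stmt_5_general JplusS hopen hcover hmono hirr
end

section
/- If a Killing vector χ preserves a hypersurface-orthogonal unit timelike vector field u (the aether), then the gradient of the inner product satisfies ∇_a(u·χ) = −(a·χ) u_a + (u·χ) a_a, where a_b = u^c ∇_c u_b is the acceleration. Consequently, any hypersurface on which u·χ = 0 and a·χ ≠ 0 is orthogonal to u, i.e., it is a leaf of the preferred foliation. -/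
/-- If a Killing vector `χ` preserves a hypersurface-orthogonal unit
timelike vector field `u` (the aether), then the gradient of the inner product
satisfies `∇_a(u·χ) = −(a·χ) u_a + (u·χ) a_a`, where `a_b = u^c ∇_c u_b` is the
acceleration.  Consequently, any hypersurface on which `u·χ = 0` and `a·χ ≠ 0` is
orthogonal to `u`, i.e. it is a leaf of the preferred foliation (its normal
`∇_a(u·χ)` is a non-zero multiple of `u_a`).

Tensors are modelled pointwise: one-forms are maps `M → Module.Dual ℝ V`, `covD ω p`
is the covariant derivative `X ↦ (∇_X ω)|_p`, and `grad f p = (∇_a f)|_p`. -/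
theorem stmt_14 {M V : Type*} [AddCommGroup V] [Module ℝ V]
    (g : M → LinearMap.BilinForm ℝ V)
    (covD : (M → Module.Dual ℝ V) → M → V →ₗ[ℝ] Module.Dual ℝ V)
    (grad : (M → ℝ) → M → Module.Dual ℝ V)
    (u χ : M → V) (uform χform aform : M → Module.Dual ℝ V)
    (huform : ∀ p, uform p = g p (u p))
    (hχform : ∀ p, χform p = g p (χ p))
    -- u is unit timelike
    (hunit : ∀ p, g p (u p) (u p) = -1)
    -- the acceleration a_b = u^c ∇_c u_b
    (haform : ∀ p, aform p = covD uform p (u p))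
    -- hypersurface orthogonality (Frobenius): ∇_a u_b = −u_a a_b + K_{ab},
    -- with K symmetric and purely spatial
    (hHSO : ∃ K : M → V →ₗ[ℝ] Module.Dual ℝ V,
      (∀ p X Y, K p X Y = K p Y X) ∧ (∀ p, K p (u p) = 0) ∧
      (∀ p X Y, covD uform p X Y = -(uform p X) * (aform p Y) + K p X Y))
    -- χ is Killing: ∇_{(a} χ_{b)} = 0
    (hKilling : ∀ p (X Y : V), covD χform p X Y + covD χform p Y X = 0)
    -- χ preserves the aether: £_χ u_a = 0
    (hLie : ∀ p (X : V), covD uform p (χ p) X + covD χform p X (u p) = 0)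
    -- Leibniz rule for the gradient of the contraction u·χ
    (hLeibniz : ∀ p (X : V), grad (fun q => uform q (χ q)) p X
        = covD uform p X (χ p) + covD χform p X (u p)) :
    (∀ p, grad (fun q => uform q (χ q)) p
        = (-(aform p (χ p))) • uform p + (uform p (χ p)) • aform p) ∧
    (∀ p, uform p (χ p) = 0 → aform p (χ p) ≠ 0 →
      ∃ c : ℝ, c ≠ 0 ∧ grad (fun q => uform q (χ q)) p = c • uform p) := by
  obtain ⟨K, hKsymm, hKu, hK⟩ := hHSO
  have main : ∀ p, grad (fun q => uform q (χ q)) p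
      = (-(aform p (χ p))) • uform p + (uform p (χ p)) • aform p := by
    intro p
    ext X
    have h1 := hLeibniz p X
    have h2 := hLie p X
    have h3 := hK p X (χ p)
    have h4 := hK p (χ p) X
    have h5 := hKsymm p X (χ p)
    simp only [LinearMap.add_apply, LinearMap.smul_apply, smul_eq_mul]
    rw [h1]
    have : covD χform p X (u p) = -(covD uform p (χ p) X) := by linarith
    rw [this, h3, h4, h5]
    ring
  refine ⟨main, fun p h0 hne => ⟨-(aform p (χ p)), by simpa using hne, ?_⟩⟩
  rw [main p, h0]
  simp
end
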